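/- In any graph G, every vertex that is not isolated is covered by at least one maximum-cardinality matching of G. -/

import Mathlib

/-!
Take a maximum matching `M` missing `v`, and a neighbour `u` of `v`. If `u` were also missed,
adding the edge `vu` would enlarge `M`; so `u` is matched, to `w` say. Trading the edge `uw`
for `vu` gives a matching of the same size that covers `v`.
-/

/-- `M` is a maximum matching of `G` (a matching covering the most vertices). -/
def IsMaxMatching {V : Type*} (G : SimpleGraph V) (M : G.Subgraph) : Prop :=
  M.IsMatching ∧ ∀ N : G.Subgraph, N.IsMatching → N.support.ncard ≤ M.support.ncard

namespace SimpleGraph.Subgraph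

variable {V : Type*} {G : SimpleGraph V} {M : G.Subgraph} {u v w : V}

lemma IsMatching.deleteVerts_pair (hM : M.IsMatching) (huw : M.Adj u w) :
    (M.deleteVerts {u, w}).IsMatching := by
  rintro x ⟨hx, hxuw⟩
  obtain ⟨y, hxy, hy⟩ := hM hx
  have hyuw : y ∉ ({u, w} : Set V) := by
    rintro (rfl | rfl)
    · exact hxuw (.inr (hM.eq_of_adj_left hxy.symm huw))
    · exact hxuw (.inl (hM.eq_of_adj_right hxy huw))
  exact ⟨y, deleteVerts_adj.2 ⟨hx, hxuw, M.edge_vert hxy.symm, hyuw, hxy⟩,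
    fun z hz => hy z (deleteVerts_adj.1 hz).2.2.2.2⟩

lemma IsMatching.sup_subgraphOfAdj (hM : M.IsMatching) (hv : v ∉ M.verts) (hu : u ∉ M.verts)
    (hvu : G.Adj v u) : (M ⊔ G.subgraphOfAdj hvu).IsMatching := by
  refine hM.sup (.subgraphOfAdj hvu) ?_
  rw [hM.support_eq_verts, (IsMatching.subgraphOfAdj hvu).support_eq_verts,
    subgraphOfAdj_verts, Set.disjoint_insert_right, Set.disjoint_singleton_right]
  exact ⟨hv, hu⟩

lemma ncard_verts_sup_subgraphOfAdj (hfin : M.verts.Finite) (hv : v ∉ M.verts)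
    (hu : u ∉ M.verts) (hvu : G.Adj v u) :
    (M ⊔ G.subgraphOfAdj hvu).verts.ncard = M.verts.ncard + 2 := by
  rw [verts_sup, subgraphOfAdj_verts, Set.ncard_union_eq _ hfin, Set.ncard_pair hvu.ne]
  rw [Set.disjoint_insert_right, Set.disjoint_singleton_right]
  exact ⟨hv, hu⟩

lemma ncard_verts_deleteVerts_pair (hfin : M.verts.Finite) (huw : M.Adj u w) :
    (M.deleteVerts {u, w}).verts.ncard + 2 = M.verts.ncard := by
  have hsub : ({u, w} : Set V) ⊆ M.verts :=
    Set.insert_subset (M.edge_vert huw) (Set.singleton_subset_iff.2 (M.edge_vert huw.symm))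
  rw [deleteVerts_verts, ← Set.ncard_pair huw.ne, Set.ncard_sdiff_add_ncard_of_subset hsub hfin]

end SimpleGraph.Subgraph

open SimpleGraph Subgraph

lemma exists_isMaxMatching {V : Type*} [Finite V] (G : SimpleGraph V) :
    ∃ M : G.Subgraph, IsMaxMatching G M := by
  obtain ⟨M, hM, hmax⟩ := Set.exists_max_image {M : G.Subgraph | M.IsMatching}
    (fun M => M.support.ncard) (Set.toFinite _) ⟨⊥, fun _ hv => hv.elim⟩
  exact ⟨M, hM, hmax⟩

section IsMaxMatching

variable {V : Type*} [Finite V] {G : SimpleGraph V} {M : G.Subgraph} {u v w : V}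

lemma IsMaxMatching.mem_verts_of_adj (hM : IsMaxMatching G M) (hv : v ∉ M.verts)
    (hvu : G.Adj v u) : u ∈ M.verts := by
  by_contra hu
  have hM' := hM.1.sup_subgraphOfAdj hv hu hvu
  have hle := hM.2 _ hM'
  rw [hM'.support_eq_verts, hM.1.support_eq_verts,
    ncard_verts_sup_subgraphOfAdj (Set.toFinite _) hv hu hvu] at hle
  omega

lemma IsMaxMatching.sup_subgraphOfAdj_deleteVerts (hM : IsMaxMatching G M) (hv : v ∉ M.verts)
    (huw : M.Adj u w) (hvu : G.Adj v u) :
    IsMaxMatching G (M.deleteVerts {u, w} ⊔ G.subgraphOfAdj hvu) := by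
  have hdel := hM.1.deleteVerts_pair huw
  have hv' : v ∉ (M.deleteVerts {u, w}).verts := fun h => hv h.1
  have hu' : u ∉ (M.deleteVerts {u, w}).verts := fun h => h.2 (.inl rfl)
  have hM' := hdel.sup_subgraphOfAdj hv' hu' hvu
  refine ⟨hM', fun N hN => ?_⟩
  rw [hM'.support_eq_verts, ncard_verts_sup_subgraphOfAdj (Set.toFinite _) hv' hu' hvu,
    ncard_verts_deleteVerts_pair (Set.toFinite _) huw, ← hM.1.support_eq_verts]
  exact hM.2 N hN

end IsMaxMatching

/-- Every non-isolated vertex of a finite graph is covered by some maximum matching. -/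
theorem stmt16 {V : Type*} [Fintype V] (G : SimpleGraph V)
    (v : V) (hv : ∃ u, G.Adj v u) :
    ∃ M : G.Subgraph, IsMaxMatching G M ∧ v ∈ M.support := by
  obtain ⟨M, hM⟩ := exists_isMaxMatching G
  by_cases hvM : v ∈ M.verts
  · exact ⟨M, hM, hM.1.support_eq_verts ▸ hvM⟩
  obtain ⟨u, hvu⟩ := hv
  obtain ⟨w, huw, -⟩ := hM.1 (hM.mem_verts_of_adj hvM hvu)
  have hM' := hM.sup_subgraphOfAdj_deleteVerts hvM huw hvu
  refine ⟨_, hM', ?_⟩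
  rw [hM'.1.support_eq_verts, verts_sup, subgraphOfAdj_verts]
  exact .inr (.inl rfl)
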